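/- (Example 1, old demand-fraction formulation cannot do better than 100.) Consider four microgrids coupled in a chain by lines {1,2}, {2,3}, {3,4}, with lossless transmission, one time step, reference values ζ_κ = 0, and fixed aggregated demands z̄₁ = −10, z̄₂ = 0, z̄₃ = 0, z̄₄ = 10. In the old formulation, microgrid κ may send to a neighbour ν a fraction δ̃_{κν} ∈ [0,1] of its own demand z̄_κ, subject to Σ_{ν: {κ,ν} a line} δ̃_{κν} ≤ 1, so the post-exchange demand of microgrid κ is z̄_κ·(1 − Σ_{ν} δ̃_{κν}) + Σ_{ν} δ̃_{νκ}·z̄_ν (sums over neighbours ν of κ). Then the minimum over all such feasible δ̃ of Σ_{κ=1}^4 (post-exchange demand of κ)² equals 100; in particular every feasible δ̃ yields objective value at least 100, and the value 100 is attained (e.g., with δ̃_{12} = δ̃_{43} = 1/2 and all other fractions 0). -/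
import Mathlib


open scoped BigOperators

/-- Adjacency of the chain `1 – 2 – 3 – 4` (0-indexed): `κ` and `ν` are joined by a
transmission line iff they are consecutive. -/
def chainAdj (κ ν : Fin 4) : Prop := κ.val + 1 = ν.val ∨ ν.val + 1 = κ.val

instance : DecidableRel chainAdj := fun κ ν =>
  inferInstanceAs (Decidable (κ.val + 1 = ν.val ∨ ν.val + 1 = κ.val))

/-- The fixed aggregated demands `z̄₁ = −10, z̄₂ = 0, z̄₃ = 0, z̄₄ = 10`. -/
noncomputable def zbarEx : Fin 4 → ℝ := ![-10, 0, 0, 10]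

/-- Post-exchange demand of microgrid `κ` in the old demand-fraction formulation
(lossless lines): `z̄_κ (1 − Σ_ν δ̃_{κν}) + Σ_ν δ̃_{νκ} z̄_ν`, sums over the
neighbours `ν` of `κ`. -/
noncomputable def postDemandOld (δ : Fin 4 → Fin 4 → ℝ) (κ : Fin 4) : ℝ :=
  zbarEx κ * (1 - ∑ ν ∈ Finset.univ.filter (fun ν => chainAdj κ ν), δ κ ν) +
    ∑ ν ∈ Finset.univ.filter (fun ν => chainAdj κ ν), δ ν κ * zbarEx ν

/-- Feasibility in the old formulation: each fraction `δ̃_{κν} ∈ [0,1]` and each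
microgrid sends away at most the fraction `1` of its own demand in total. -/
def feasibleOld (δ : Fin 4 → Fin 4 → ℝ) : Prop :=
  (∀ κ ν, chainAdj κ ν → 0 ≤ δ κ ν ∧ δ κ ν ≤ 1) ∧
  ∀ κ, ∑ ν ∈ Finset.univ.filter (fun ν => chainAdj κ ν), δ κ ν ≤ 1

/-- The strategy `δ̃₁₂ = δ̃₄₃ = 1/2`, all other fractions `0`. -/
noncomputable def δoldOpt : Fin 4 → Fin 4 → ℝ :=
  fun κ ν => if (κ = 0 ∧ ν = 1) ∨ (κ = 3 ∧ ν = 2) then 1 / 2 else 0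

lemma val3Aux : ((3 : Fin 4) : ℕ) = 3 := rfl

lemma sum_expand_aux (δ : Fin 4 → Fin 4 → ℝ) :
    ∑ κ, (postDemandOld δ κ) ^ 2 =
      (-10 * (1 - δ 0 1))^2 + (-10 * δ 0 1)^2 + (10 * δ 3 2)^2 + (10 * (1 - δ 3 2))^2 := by
  simp [postDemandOld, zbarEx, Finset.sum_filter, Fin.sum_univ_four, chainAdj, val3Aux]
  ring

lemma feasOpt : feasibleOld δoldOpt := by
  constructor
  · intro κ ν _
    unfold δoldOpt
    split <;> norm_num
  · intro κ
    fin_cases κ <;>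
      simp [Finset.sum_filter, Fin.sum_univ_four, chainAdj, val3Aux, δoldOpt] <;> norm_num

lemma valOpt : ∑ κ, (postDemandOld δoldOpt κ) ^ 2 = 100 := by
  rw [sum_expand_aux]
  norm_num [δoldOpt]

/-- Example 1 (old demand-fraction formulation cannot do better than 100): with
reference values `ζ_κ = 0`, the minimum over all feasible fraction strategies of
`Σ_κ (post-exchange demand of κ)²` equals `100`; in particular every feasible `δ̃`
gives value at least `100`, and `100` is attained by `δ̃₁₂ = δ̃₄₃ = 1/2`
(all other fractions `0`). -/
theorem example_old_formulation_min_is_100 :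
    IsLeast {c : ℝ | ∃ δ : Fin 4 → Fin 4 → ℝ, feasibleOld δ ∧
        c = ∑ κ, (postDemandOld δ κ) ^ 2} 100 ∧
    feasibleOld δoldOpt ∧
    ∑ κ, (postDemandOld δoldOpt κ) ^ 2 = 100 := by
  refine ⟨⟨⟨δoldOpt, feasOpt, valOpt.symm⟩, ?_⟩, feasOpt, valOpt⟩
  rintro c ⟨δ, -, rfl⟩
  rw [sum_expand_aux]
  nlinarith [sq_nonneg (δ 0 1 - 1/2), sq_nonneg (δ 3 2 - 1/2)]
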